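/- arXiv:1901.05270 — 2 statements merged into one kernel-verified Lean document; each statement's English description precedes it below -/
import Mathlib

section
/- Let H = (1/m) Σ_{i=1}^m (I − P̃_i) be a uniform stoquastic k-local Hamiltonian with k ≥ 2, let x ∈ Σ^n, and let L_1, …, L_ℓ be layers, where each L_t is a set of indices in {1,…,m} whose qudit sets are pairwise disjoint and L_t applied to a vector means multiplying by the product of the projectors {P̃_i : i ∈ L_t}. If supp(L_ℓ ⋯ L_1 |x⟩) contains a bad string for H, then there exist a bad string y for H and a walk in the graph G(H) from x to y of length at most Σ_{j=2}^{ℓ+1} k^j. -/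
open Matrix

/-- A uniform stoquastic `k`-local term on strings in `Σ^n`: a set `Q` of at most `k` qudits
together with a finite family of pairwise disjoint nonempty subsets of `Σ^Q`. -/
structure UTerm (A : Type) [Fintype A] [DecidableEq A] (n k : ℕ) where
  Q : Finset (Fin n)
  hQ : Q.card ≤ k
  J : ℕ
  T : Fin J → Finset ({ i : Fin n // i ∈ Q } → A)
  hT : ∀ j, (T j).Nonempty
  hdisj : ∀ j j', j ≠ j' → Disjoint (T j) (T j')

variable {A : Type} [Fintype A] [DecidableEq A] {n k : ℕ}

/-- The string equal to `t` on `Q` and to `z` on `Qᶜ`. -/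
def glue (Q : Finset (Fin n)) (t : { i : Fin n // i ∈ Q } → A)
    (z : { i : Fin n // i ∉ Q } → A) : Fin n → A :=
  fun i => if h : i ∈ Q then t ⟨i, h⟩ else z ⟨i, h⟩

/-- The subset state `|T_j , z⟩` of a local term. -/
noncomputable def UTerm.tvec (P : UTerm A n k) (j : Fin P.J)
    (z : { i : Fin n // i ∉ P.Q } → A) : (Fin n → A) → ℂ :=
  ((Real.sqrt (P.T j).card : ℂ))⁻¹ •
    (∑ t ∈ P.T j, Pi.single (glue P.Q t z) (1 : ℂ) : (Fin n → A) → ℂ)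

/-- The groundspace projector `P̃ = Σ_j Σ_z |T_j,z⟩⟨T_j,z|` of a uniform stoquastic local term. -/
noncomputable def UTerm.proj (P : UTerm A n k) : Matrix (Fin n → A) (Fin n → A) ℂ :=
  ∑ j : Fin P.J, ∑ z : { i : Fin n // i ∉ P.Q } → A,
    vecMulVec (P.tvec j z) (star (P.tvec j z))

/-- The uniform stoquastic local Hamiltonian `H = (1/m) Σᵢ (I - P̃ᵢ)`. -/
noncomputable def ham {m : ℕ} (terms : Fin m → UTerm A n k) :
    Matrix (Fin n → A) (Fin n → A) ℂ :=
  ((m : ℂ))⁻¹ • ∑ i, (1 - (terms i).proj)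

/-- A string is bad for `H` if its diagonal entry in some groundspace projector vanishes. -/
def Bad {m : ℕ} (terms : Fin m → UTerm A n k) (x : Fin n → A) : Prop :=
  ∃ i, (terms i).proj x x = 0

/-- `H` is `ε`-frustrated: every unit vector has energy at least `ε`. -/
def Frustrated {m : ℕ} (terms : Fin m → UTerm A n k) (ε : ℝ) : Prop :=
  ∀ ψ : (Fin n → A) → ℂ, ∑ x, ‖ψ x‖ ^ 2 = 1 →
    ε ≤ (star ψ ⬝ᵥ (ham terms).mulVec ψ).re

/-- Every qudit lies in at most `d` of the sets `Qᵢ`. -/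
def DegreeBound {m : ℕ} (terms : Fin m → UTerm A n k) (d : ℕ) : Prop :=
  ∀ q : Fin n, (Finset.univ.filter (fun i => q ∈ (terms i).Q)).card ≤ d

/-- The subset state of a finite set `S`. -/
noncomputable def subsetState {X : Type} [DecidableEq X] (S : Finset X) : X → ℂ :=
  fun x => if x ∈ S then ((Real.sqrt S.card : ℂ))⁻¹ else 0

/-- A walk of length `r` in the graph `G(H)`: consecutive strings are connected by some
groundspace projector with a positive matrix entry. -/
def WalkLen {A : Type} [Fintype A] [DecidableEq A] {n k m : ℕ}
    (terms : Fin m → UTerm A n k) (x y : Fin n → A) (r : ℕ) : Prop :=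
  ∃ w : Fin (r + 1) → (Fin n → A), w 0 = x ∧ w (Fin.last r) = y ∧
    ∀ t : Fin r, ∃ i, 0 < ((terms i).proj (w t.castSucc) (w t.succ)).re

/-!
Expanding `L_ℓ ⋯ L_1 |x⟩` projector by projector, a bad string `w` in its support is the end of a
chain of strings starting at `x` in which consecutive strings are linked by the projector applied
in between. Only the projectors in the backward light cone of the qudits `Q_i` of a term violated
by `w` matter: replaying just their steps from `x` gives a walk to a string that agrees with `w`
on `Q_i`, hence is bad as well. The supports within a layer are disjoint, so every projector of a
layer touching the cone meets it in qudits of its own: a layer adds at most `|C|` steps and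
multiplies the size `|C|` of the cone by at most `k`. Starting from `|Q_i| ≤ k` this gives at most
`k + k² + ⋯ + k^ℓ` steps.
-/

section LightCone

open Finset

variable {α : Type*} [DecidableEq α]

/-- `Qs` lists the supports of projectors from the last one applied to the first, and `C` holds the
qudits whose final content matters; a projector enters the cone iff it touches it. -/
def lightCone : List (Finset α) → Finset α → Finset α
  | [], C => C
  | Q :: Qs, C => lightCone Qs (if Disjoint Q C then C else C ∪ Q)

def lightConeSteps : List (Finset α) → Finset α → ℕ
  | [], _ => 0
  | Q :: Qs, C => if Disjoint Q C then lightConeSteps Qs C else lightConeSteps Qs (C ∪ Q) + 1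

theorem lightCone_append (Qs Rs : List (Finset α)) (C : Finset α) :
    lightCone (Qs ++ Rs) C = lightCone Rs (lightCone Qs C) := by
  induction Qs generalizing C with
  | nil => rfl
  | cons Q Qs ih => exact ih _

theorem lightConeSteps_append (Qs Rs : List (Finset α)) (C : Finset α) :
    lightConeSteps (Qs ++ Rs) C = lightConeSteps Qs C + lightConeSteps Rs (lightCone Qs C) := by
  induction Qs generalizing C with
  | nil => simp [lightCone, lightConeSteps]
  | cons Q Qs ih =>
    simp only [List.cons_append, lightConeSteps, lightCone]
    split_ifs
    · rw [ih]
    · rw [ih]; omega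

theorem lightCone_union_of_disjoint {Qs : List (Finset α)} {S : Finset α}
    (hS : ∀ Q ∈ Qs, Disjoint Q S) (C : Finset α) :
    lightCone Qs (C ∪ S) = lightCone Qs C ∪ S ∧
      lightConeSteps Qs (C ∪ S) = lightConeSteps Qs C := by
  induction Qs generalizing C with
  | nil => exact ⟨rfl, rfl⟩
  | cons Q Qs ih =>
    have hQS := hS Q List.mem_cons_self
    have ih := ih fun R hR => hS R (List.mem_cons_of_mem Q hR)
    have hdisj : Disjoint Q (C ∪ S) ↔ Disjoint Q C := by simp [disjoint_union_right, hQS]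
    simp only [lightCone, lightConeSteps, hdisj]
    split_ifs
    · exact ih C
    · rw [union_right_comm]; exact ⟨(ih _).1, by rw [(ih _).2]⟩

theorem lightConeSteps_le_and_card_lightCone_le {k : ℕ} (hk : 1 ≤ k) {Qs : List (Finset α)}
    (hdisj : Qs.Pairwise Disjoint) (hcard : ∀ Q ∈ Qs, #Q ≤ k) (C : Finset α) :
    lightConeSteps Qs C ≤ #C ∧ #(lightCone Qs C) ≤ k * #C := by
  induction Qs generalizing C with
  | nil => exact ⟨Nat.zero_le _, Nat.le_mul_of_pos_left _ hk⟩
  | cons Q Qs ih =>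
    obtain ⟨hQQs, hQs⟩ := List.pairwise_cons.mp hdisj
    have ih := ih hQs fun R hR => hcard R (List.mem_cons_of_mem Q hR)
    simp only [lightCone, lightConeSteps]
    split_ifs with hQC
    · exact ih C
    · -- the part of `C` inside `Q` is invisible to the rest of the layer
      have hlt : #(C \ Q) < #C := by
        have := card_sdiff_add_card_inter C Q
        have := card_pos.mpr (inter_comm Q C ▸ not_disjoint_iff_nonempty_inter.mp hQC)
        omega
      obtain ⟨hcone, hsteps⟩ := lightCone_union_of_disjoint (fun R hR => (hQQs R hR).symm) (C \ Q)
      rw [sdiff_union_self_eq_union] at hcone hsteps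
      obtain ⟨ih₁, ih₂⟩ := ih (C \ Q)
      refine ⟨by omega, ?_⟩
      rw [hcone]
      calc #(lightCone Qs (C \ Q) ∪ Q) ≤ k * #(C \ Q) + k :=
            (card_union_le _ _).trans (add_le_add ih₂ (hcard Q List.mem_cons_self))
        _ ≤ k * #C := by nlinarith

theorem lightConeSteps_flatten_le {k : ℕ} (hk : 1 ≤ k) {Ls : List (List (Finset α))}
    (hdisj : ∀ L ∈ Ls, L.Pairwise Disjoint) (hcard : ∀ L ∈ Ls, ∀ Q ∈ L, #Q ≤ k)
    (C : Finset α) :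
    lightConeSteps Ls.flatten C ≤ #C * ∑ t ∈ range Ls.length, k ^ t := by
  induction Ls generalizing C with
  | nil => simp [lightConeSteps]
  | cons L Ls ih =>
    obtain ⟨hsteps, hcone⟩ := lightConeSteps_le_and_card_lightCone_le hk
      (hdisj L List.mem_cons_self) (hcard L List.mem_cons_self) C
    have ih := ih (fun L' h => hdisj L' (List.mem_cons_of_mem L h))
      (fun L' h => hcard L' (List.mem_cons_of_mem L h)) (lightCone L C)
    rw [List.flatten_cons, lightConeSteps_append, List.length_cons, sum_range_succ']
    calc lightConeSteps L C + lightConeSteps Ls.flatten (lightCone L C)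
        ≤ #C + k * #C * ∑ t ∈ range Ls.length, k ^ t := by
          gcongr; exact ih.trans (Nat.mul_le_mul_right _ hcone)
      _ = #C * (∑ t ∈ range Ls.length, k ^ (t + 1) + k ^ 0) := by
          simp only [pow_succ, ← sum_mul]; ring

end LightCone

def restrictCompl {α : Type} (Q : Finset (Fin n)) (u : Fin n → α) : { i : Fin n // i ∉ Q } → α :=
  fun i => u i

theorem glue_eq_iff {α : Type} {Q : Finset (Fin n)} {t : { i : Fin n // i ∈ Q } → α}
    {z : { i : Fin n // i ∉ Q } → α} {u : Fin n → α} :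
    glue Q t z = u ↔ t = Q.restrict u ∧ z = restrictCompl Q u := by
  constructor
  · rintro rfl
    exact ⟨funext fun i => by simp [glue, i.2], funext fun i => by simp [glue, restrictCompl, i.2]⟩
  · rintro ⟨rfl, rfl⟩
    funext i
    unfold glue
    split <;> rfl

namespace UTerm

variable (P : UTerm A n k)

def Linked (u v : Fin n → A) : Prop :=
  ∃ j, P.Q.restrict u ∈ P.T j ∧ P.Q.restrict v ∈ P.T j ∧ restrictCompl P.Q u = restrictCompl P.Q v

theorem tvec_apply (j : Fin P.J) (z : { i : Fin n // i ∉ P.Q } → A) (u : Fin n → A) :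
    P.tvec j z u = if P.Q.restrict u ∈ P.T j ∧ z = restrictCompl P.Q u
      then ((Real.sqrt (P.T j).card : ℂ))⁻¹ else 0 := by
  simp only [tvec, Pi.smul_apply, Finset.sum_apply, Pi.single_apply, smul_eq_mul,
    eq_comm (a := u), glue_eq_iff, ite_and, Finset.sum_ite_eq', mul_ite, mul_one, mul_zero]

theorem proj_apply (u v : Fin n → A) :
    P.proj u v = ((∑ j, if P.Q.restrict u ∈ P.T j ∧ P.Q.restrict v ∈ P.T j ∧
      restrictCompl P.Q u = restrictCompl P.Q v then ((P.T j).card : ℝ)⁻¹ else 0 : ℝ) : ℂ) := by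
  simp only [proj, Matrix.sum_apply, vecMulVec_apply, Pi.star_apply, Complex.ofReal_sum]
  refine Finset.sum_congr rfl fun j _ => ?_
  rw [Finset.sum_eq_single (restrictCompl P.Q u)]
  · simp only [tvec_apply, and_true]
    split_ifs <;> simp_all [← Complex.ofReal_inv, ← Complex.ofReal_mul, ← mul_inv]
  · intro z _ hz
    simp [tvec_apply, hz]
  · simp

theorem re_proj_pos_iff (u v : Fin n → A) : 0 < (P.proj u v).re ↔ P.Linked u v := by
  rw [proj_apply, Complex.ofReal_re, Finset.sum_pos_iff_of_nonneg fun j _ => by positivity]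
  refine exists_congr fun j => ⟨fun h => ?_, fun h => ?_⟩
  · obtain ⟨-, hpos⟩ := h
    by_contra hj
    simp [hj] at hpos
  · have := Finset.card_pos.mpr (P.hT j)
    exact ⟨Finset.mem_univ j, by rw [if_pos h]; positivity⟩

theorem proj_ne_zero_iff (u v : Fin n → A) : P.proj u v ≠ 0 ↔ P.Linked u v := by
  rw [← re_proj_pos_iff, proj_apply, Complex.ofReal_re, Ne, Complex.ofReal_eq_zero,
    (Finset.sum_nonneg fun j _ => by positivity).lt_iff_ne, ne_comm]

theorem proj_diag_eq_of_eqOn {u v : Fin n → A} (h : Set.EqOn u v P.Q) :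
    P.proj u u = P.proj v v := by
  have : P.Q.restrict u = P.Q.restrict v := funext fun q => h q.2
  simp only [proj_apply, this]

variable {P}

theorem Linked.eq_of_notMem {u v : Fin n → A} (h : P.Linked u v) {q : Fin n} (hq : q ∉ P.Q) :
    u q = v q := by
  obtain ⟨_, _, _, hcompl⟩ := h
  exact congrFun hcompl ⟨q, hq⟩

theorem Linked.piecewise {u v y : Fin n → A} (h : P.Linked u v) (hy : Set.EqOn y v P.Q) :
    P.Linked y (P.Q.piecewise u y) := by
  obtain ⟨j, hu, hv, _⟩ := h
  refine ⟨j, ?_, ?_, ?_⟩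
  · rwa [show P.Q.restrict y = P.Q.restrict v from funext fun q => hy q.2]
  · rwa [show P.Q.restrict (P.Q.piecewise u y) = P.Q.restrict u from
      funext fun q => P.Q.piecewise_eq_of_mem _ _ q.2]
  · exact funext fun q => (P.Q.piecewise_eq_of_notMem _ _ q.2).symm

end UTerm

section Walks

variable {m : ℕ} {terms : Fin m → UTerm A n k}

theorem WalkLen.refl (x : Fin n → A) : WalkLen terms x x 0 :=
  ⟨fun _ => x, rfl, rfl, fun t => t.elim0⟩

theorem WalkLen.snoc {x y z : Fin n → A} {r : ℕ} (h : WalkLen terms x y r)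
    (hyz : ∃ i, 0 < ((terms i).proj y z).re) : WalkLen terms x z (r + 1) := by
  obtain ⟨w, hw0, hwr, hstep⟩ := h
  refine ⟨Fin.snoc w z, by simpa using hw0, Fin.snoc_last _ _, Fin.lastCases ?_ fun t => ?_⟩
  · simpa [hwr] using hyz
  · rw [Fin.succ_castSucc, Fin.snoc_castSucc, Fin.snoc_castSucc]
    exact hstep t

end Walks

theorem exists_walkLen_of_mulVec_single_ne_zero {m : ℕ} (terms : Fin m → UTerm A n k)
    (x : Fin n → A) (L : List (Fin m)) (C : Finset (Fin n)) {w : Fin n → A}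
    (hw : ((L.map fun i => (terms i).proj).prod *ᵥ Pi.single x 1) w ≠ 0) :
    ∃ y, Set.EqOn y w C ∧
      WalkLen terms x y (lightConeSteps (L.map fun i => (terms i).Q) C) := by
  induction L generalizing C w with
  | nil =>
    obtain rfl : w = x := by
      by_contra h
      simp [h] at hw
    exact ⟨w, Set.eqOn_refl _ _, WalkLen.refl w⟩
  | cons i L ih =>
    rw [List.map_cons, List.prod_cons, ← Matrix.mulVec_mulVec] at hw
    obtain ⟨s, hws, hs⟩ := Finset.exists_ne_zero_of_sum_ne_zero hw |>.imp
      fun s hs => mul_ne_zero_iff.mp hs.2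
    rw [UTerm.proj_ne_zero_iff] at hws
    simp only [List.map_cons, lightConeSteps]
    split_ifs with hdisj
    · obtain ⟨y, hys, hwalk⟩ := ih C hs
      refine ⟨y, fun q hq => ?_, hwalk⟩
      rw [hys hq, hws.eq_of_notMem (Finset.disjoint_right.mp hdisj hq)]
    · obtain ⟨y, hys, hwalk⟩ := ih (C ∪ (terms i).Q) hs
      have hstep := hws.piecewise (hys.mono (Finset.coe_subset.mpr Finset.subset_union_right))
      refine ⟨(terms i).Q.piecewise w y, fun q hq => ?_,
        hwalk.snoc ⟨i, ((terms i).re_proj_pos_iff _ _).mpr hstep⟩⟩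
      by_cases hqQ : q ∈ (terms i).Q
      · exact Finset.piecewise_eq_of_mem _ _ _ hqQ
      · rw [Finset.piecewise_eq_of_notMem _ _ _ hqQ, hys (Finset.mem_union_left _ hq),
          hws.eq_of_notMem hqQ]

theorem mul_sum_range_pow_le_sum_Icc (k ℓ : ℕ) :
    k * ∑ t ∈ Finset.range ℓ, k ^ t ≤ ∑ j ∈ Finset.Icc 2 (ℓ + 1), k ^ j := by
  rw [← Finset.Ico_add_one_right_eq_Icc, Finset.sum_Ico_eq_sum_range, Finset.mul_sum,
    show ℓ + 1 + 1 - 2 = ℓ by omega]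
  refine Finset.sum_le_sum fun t _ => ?_
  rw [← pow_succ', add_comm 2 t]
  rcases Nat.eq_zero_or_pos k with rfl | hk
  · simp
  · exact Nat.pow_le_pow_right hk (by omega)

theorem stmt13_general {A : Type} [Fintype A] [DecidableEq A]
    {n k m : ℕ} (hk : 2 ≤ k)
    (terms : Fin m → UTerm A n k)
    (x : Fin n → A) {ℓ : ℕ} (layers : Fin ℓ → List (Fin m))
    (hlayers : ∀ t, (layers t).Nodup ∧
      (layers t).Pairwise (fun i i' => Disjoint (terms i).Q (terms i').Q))
    (hbad : ∃ w, Bad terms w ∧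
      ((((List.ofFn layers).reverse.flatten.map (fun i => (terms i).proj)).prod.mulVec
        (Pi.single x 1)) w ≠ 0)) :
    ∃ y, Bad terms y ∧ ∃ r ≤ ∑ j ∈ Finset.Icc 2 (ℓ + 1), k ^ j, WalkLen terms x y r := by
  obtain ⟨w, ⟨i, hwi⟩, hw⟩ := hbad
  obtain ⟨y, hyw, hwalk⟩ := exists_walkLen_of_mulVec_single_ne_zero terms x _ (terms i).Q hw
  refine ⟨y, ⟨i, (terms i).proj_diag_eq_of_eqOn hyw ▸ hwi⟩, _, ?_, hwalk⟩
  have hsteps := lightConeSteps_flatten_le (by omega : 1 ≤ k)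
    (Ls := (List.ofFn layers).reverse.map (List.map fun i => (terms i).Q)) ?_ ?_ (terms i).Q
  · rw [List.map_flatten]
    calc _ ≤ (terms i).Q.card * ∑ t ∈ Finset.range ℓ, k ^ t := by simpa using hsteps
      _ ≤ k * ∑ t ∈ Finset.range ℓ, k ^ t := Nat.mul_le_mul_right _ (terms i).hQ
      _ ≤ _ := mul_sum_range_pow_le_sum_Icc k ℓ
  · simp only [List.mem_map, List.mem_reverse, List.mem_ofFn]
    rintro _ ⟨_, ⟨t, rfl⟩, rfl⟩
    exact List.pairwise_map.mpr (hlayers t).2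
  · simp only [List.mem_map, List.mem_reverse, List.mem_ofFn]
    rintro _ ⟨_, ⟨t, rfl⟩, rfl⟩ _ hQ
    obtain ⟨j, -, rfl⟩ := List.mem_map.mp hQ
    exact (terms j).hQ

/-- Light-cone argument: if applying layers `L₁, …, L_ℓ` of non-overlapping groundspace
projectors to `|x⟩` reaches a state whose support contains a bad string, then there is a walk
in `G(H)` of length at most `Σ_{j=2}^{ℓ+1} k^j` from `x` to some bad string. -/
theorem stmt13 {A : Type} [Fintype A] [DecidableEq A] (hA : 2 ≤ Fintype.card A)
    {n k m : ℕ} (hn : 1 ≤ n) (hk : 2 ≤ k) (hm : 1 ≤ m)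
    (terms : Fin m → UTerm A n k)
    (x : Fin n → A) {ℓ : ℕ} (layers : Fin ℓ → List (Fin m))
    (hlayers : ∀ t, (layers t).Nodup ∧
      (layers t).Pairwise (fun i i' => Disjoint (terms i).Q (terms i').Q))
    (hbad : ∃ w, Bad terms w ∧
      ((((List.ofFn layers).reverse.flatten.map (fun i => (terms i).proj)).prod.mulVec
        (Pi.single x 1)) w ≠ 0)) :
    ∃ y, Bad terms y ∧ ∃ r ≤ ∑ j ∈ Finset.Icc 2 (ℓ + 1), k ^ j, WalkLen terms x y r :=
  stmt13_general hk terms x layers hlayers hbad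
end

section
/- Let H = (1/m) Σ_{i=1}^m (I − P̃_i) be a uniform stoquastic k-local Hamiltonian, let ψ be a non-negative unit vector on ℂ^(Σ^n) with S = supp(ψ) containing no bad strings for H, and suppose there are reals g, h > 0 such that every x ∈ S satisfies ψ_x ≥ 1/√(g·|S|) and ⟨ψ|H|ψ⟩ < 1/h. Then |{x ∈ S : there exist i ∈ {1,…,m} and y ∉ S with ⟨x|P̃_i|y⟩ > 0}| < (m · |Σ|^k · g / h) · |S|. -/
open Matrix Classical

variable {A : Type} [Fintype A] [DecidableEq A] {n k : ℕ}

/-! Write `ψ = r` with `r ≥ 0` real. Each `P̃` is a sum of subset-state projectors onto the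
pairwise disjoint blocks `{x(t,z) : t ∈ T_j}`, so `⟨r|I - P̃|r⟩` is at least the sum over blocks
`B` of `∑_B r² - (∑_B r)² / |B|`. If `B` meets the complement of `S`, where `r` vanishes,
Cauchy–Schwarz on the other `|B| - 1` strings makes this block term at least
`∑_B r² / |B| ≥ |Σ|^(-k) ∑_B r²`. A string of `S` joined by `P̃ᵢ` to a string outside `S` lies in
such a block, so the boundary carries `ψ`-weight at most `|Σ|^k m ⟨ψ|H|ψ⟩ < m |Σ|^k / h`, while
each of its strings has weight at least `1 / (g |S|)`. -/

open Finset

lemma Finset.sum_biUnion_le_sum_sum {ι α M : Type*} [DecidableEq α] [AddCommMonoid M]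
    [PartialOrder M] [IsOrderedAddMonoid M] {f : α → M} (hf : ∀ x, 0 ≤ f x)
    (s : Finset ι) (t : ι → Finset α) :
    ∑ x ∈ s.biUnion t, f x ≤ ∑ i ∈ s, ∑ x ∈ t i, f x := by
  induction s using Finset.cons_induction with
  | empty => simp
  | cons i s hi ih =>
    rw [cons_eq_insert, biUnion_insert, sum_insert hi]
    calc ∑ x ∈ t i ∪ s.biUnion t, f x
        ≤ ∑ x ∈ t i ∪ s.biUnion t, f x + ∑ x ∈ t i ∩ s.biUnion t, f x :=
          le_add_of_nonneg_right (sum_nonneg fun x _ => hf x)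
      _ = ∑ x ∈ t i, f x + ∑ x ∈ s.biUnion t, f x := sum_union_inter
      _ ≤ ∑ x ∈ t i, f x + ∑ j ∈ s, ∑ x ∈ t j, f x := add_le_add_right ih _

lemma sq_sum_div_card_le_sum_sq {ι : Type*} (s : Finset ι) (f : ι → ℝ) :
    (∑ i ∈ s, f i) ^ 2 / #s ≤ ∑ i ∈ s, f i ^ 2 :=
  div_le_of_le_mul₀ (Nat.cast_nonneg _) (sum_nonneg fun i _ => sq_nonneg (f i))
    (by rw [mul_comm]; exact sq_sum_le_card_mul_sum_sq)

lemma sum_sq_le_card_mul_sub_of_eq_zero {ι : Type*} [DecidableEq ι] {s : Finset ι} {f : ι → ℝ}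
    {a : ι} (ha : a ∈ s) (hfa : f a = 0) :
    ∑ i ∈ s, f i ^ 2 ≤ #s * (∑ i ∈ s, f i ^ 2 - (∑ i ∈ s, f i) ^ 2 / #s) := by
  have hcard : (#(s.erase a) : ℝ) = #s - 1 := by
    rw [card_erase_of_mem ha, Nat.cast_pred (card_pos.2 ⟨a, ha⟩)]
  have hcs : (∑ i ∈ s, f i) ^ 2 ≤ (#s - 1) * ∑ i ∈ s, f i ^ 2 := by
    rw [← sum_erase s hfa, ← hcard]
    calc (∑ i ∈ s.erase a, f i) ^ 2 ≤ #(s.erase a) * ∑ i ∈ s.erase a, f i ^ 2 :=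
          sq_sum_le_card_mul_sum_sq
      _ ≤ #(s.erase a) * ∑ i ∈ s, f i ^ 2 := by
          refine mul_le_mul_of_nonneg_left ?_ (Nat.cast_nonneg _)
          exact sum_le_sum_of_subset_of_nonneg (erase_subset a s) fun i _ _ => sq_nonneg (f i)
  have hpos : (0 : ℝ) < #s := Nat.cast_pos.2 (card_pos.2 ⟨a, ha⟩)
  rw [mul_sub, mul_div_cancel₀ _ hpos.ne']
  linarith

lemma card_le_mul_sum_sq_of_one_div_sqrt_le {ι : Type*} {s : Finset ι} {r : ι → ℝ} {a : ℝ}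
    (ha : 0 < a) (h : ∀ x ∈ s, 1 / √a ≤ r x) : (#s : ℝ) ≤ a * ∑ x ∈ s, r x ^ 2 := by
  have hsq : ∀ x ∈ s, a⁻¹ ≤ r x ^ 2 := fun x hx =>
    calc a⁻¹ = (1 / √a) ^ 2 := by rw [div_pow, Real.sq_sqrt ha.le, one_pow, one_div]
      _ ≤ r x ^ 2 := pow_le_pow_left₀ (one_div_nonneg.2 (Real.sqrt_nonneg a)) (h x hx) 2
  calc (#s : ℝ) = a * (#s • a⁻¹) := by
        rw [nsmul_eq_mul, mul_left_comm, mul_inv_cancel₀ ha.ne', mul_one]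
    _ ≤ a * ∑ x ∈ s, r x ^ 2 := mul_le_mul_of_nonneg_left (card_nsmul_le_sum s _ _ hsq) ha.le

section SubsetState

variable {X : Type} [DecidableEq X]

lemma vecMulVec_subsetState_apply (s : Finset X) (x y : X) :
    vecMulVec (subsetState s) (star (subsetState s)) x y =
      if x ∈ s ∧ y ∈ s then (((#s : ℝ)⁻¹ : ℝ) : ℂ) else 0 := by
  by_cases hx : x ∈ s <;> by_cases hy : y ∈ s <;>
    simp [subsetState, vecMulVec_apply, hx, hy, ← Complex.ofReal_inv, ← Complex.ofReal_mul,
      ← mul_inv, Real.mul_self_sqrt]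

lemma star_dotProduct_vecMulVec_subsetState_mulVec [Fintype X] (s : Finset X) (r : X → ℝ) :
    star (fun x => (r x : ℂ)) ⬝ᵥ vecMulVec (subsetState s) (star (subsetState s)) *ᵥ
      (fun x => (r x : ℂ)) = (((∑ x ∈ s, r x) ^ 2 / #s : ℝ) : ℂ) := by
  rw [vecMulVec_mulVec, dotProduct_smul]
  have hN : ((√(#s : ℝ) : ℝ) : ℂ)⁻¹ * ((√(#s : ℝ) : ℝ) : ℂ)⁻¹ = (#s : ℂ)⁻¹ := by
    rw [← mul_inv, ← Complex.ofReal_mul, Real.mul_self_sqrt (Nat.cast_nonneg _)]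
    simp
  simp only [subsetState, dotProduct, Pi.star_apply, apply_ite star, star_zero, ite_mul, mul_ite,
    zero_mul, mul_zero, sum_ite_mem, univ_inter, MulOpposite.smul_eq_mul_unop,
    MulOpposite.unop_op, RCLike.star_def, Complex.conj_ofReal, map_inv₀]
  rw [← sum_mul, ← mul_sum]
  push_cast
  linear_combination (∑ x ∈ s, (r x : ℂ)) ^ 2 * hN

end SubsetState

omit [Fintype A] [DecidableEq A] in
lemma glue_injective (Q : Finset (Fin n)) (z : { i : Fin n // i ∉ Q } → A) :
    Function.Injective (glue Q · z) := fun t t' h =>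
  funext fun i => by simpa [glue, i.2] using congrFun h i.1

omit [Fintype A] [DecidableEq A] in
lemma glue_eq_glue_iff {Q : Finset (Fin n)} {t t' : { i : Fin n // i ∈ Q } → A}
    {z z' : { i : Fin n // i ∉ Q } → A} : glue Q t z = glue Q t' z' ↔ t = t' ∧ z = z' := by
  refine ⟨fun h => ⟨?_, ?_⟩, fun h => h.1 ▸ h.2 ▸ rfl⟩ <;> funext i
  · simpa [glue, i.2] using congrFun h i.1
  · simpa [glue, i.2] using congrFun h i.1

namespace UTerm

variable (P : UTerm A n k)

def block (b : Fin P.J × ({ i : Fin n // i ∉ P.Q } → A)) : Finset (Fin n → A) :=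
  (P.T b.1).map ⟨(glue P.Q · b.2), glue_injective P.Q b.2⟩

lemma card_block_le (hA : 0 < Fintype.card A) (b : Fin P.J × ({ i : Fin n // i ∉ P.Q } → A)) :
    #(P.block b) ≤ Fintype.card A ^ k :=
  calc #(P.block b) = #(P.T b.1) := card_map _
    _ ≤ Fintype.card ({ i : Fin n // i ∈ P.Q } → A) := card_le_univ _
    _ = Fintype.card A ^ #P.Q := by simp
    _ ≤ Fintype.card A ^ k := Nat.pow_le_pow_right hA P.hQ

lemma pairwiseDisjoint_block :
    (Set.univ : Set (Fin P.J × ({ i : Fin n // i ∉ P.Q } → A))).PairwiseDisjoint P.block := by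
  rintro ⟨j, z⟩ - ⟨j', z'⟩ - hne
  refine disjoint_left.2 fun x hx hx' => hne ?_
  obtain ⟨t, ht, rfl⟩ := mem_map.1 hx
  obtain ⟨t', ht', he⟩ := mem_map.1 hx'
  obtain ⟨rfl, rfl⟩ := glue_eq_glue_iff.1 he
  by_contra hjj
  exact disjoint_left.1 (P.hdisj j' j fun h => hjj (Prod.ext h.symm rfl)) ht' ht

lemma sum_sum_block_le {f : (Fin n → A) → ℝ} (hf : ∀ x, 0 ≤ f x) :
    ∑ b, ∑ x ∈ P.block b, f x ≤ ∑ x, f x := by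
  rw [← sum_biUnion (P.pairwiseDisjoint_block.subset (Set.subset_univ _))]
  exact sum_le_sum_of_subset_of_nonneg (subset_univ _) fun x _ _ => hf x

lemma tvec_eq_subsetState (j : Fin P.J) (z : { i : Fin n // i ∉ P.Q } → A) :
    P.tvec j z = subsetState (P.block (j, z)) := by
  funext x
  have hsum : (∑ t ∈ P.T j, Pi.single (glue P.Q t z) 1 : (Fin n → A) → ℂ) =
      ∑ y ∈ P.block (j, z), Pi.single y 1 := by
    simp only [block, sum_map, Function.Embedding.coeFn_mk]
  simp only [UTerm.tvec, subsetState, hsum, block, card_map, Pi.smul_apply, Finset.sum_apply,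
    Pi.single_apply, sum_ite_eq, smul_eq_mul, mul_ite, mul_one, mul_zero]

lemma proj_eq_sum_block : P.proj = ∑ b, vecMulVec (subsetState (P.block b))
      (star (subsetState (P.block b))) := by
  rw [UTerm.proj, Fintype.sum_prod_type]
  simp only [tvec_eq_subsetState]

lemma exists_mem_block_of_proj_re_pos {x y : Fin n → A} (h : 0 < (P.proj x y).re) :
    ∃ b, x ∈ P.block b ∧ y ∈ P.block b := by
  rw [proj_eq_sum_block, Matrix.sum_apply, Complex.re_sum] at h
  obtain ⟨b, -, hb⟩ := exists_lt_of_sum_lt (f := fun _ => (0 : ℝ)) (by simpa using h)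
  rw [vecMulVec_subsetState_apply] at hb
  by_contra hxy
  simp [not_exists.1 hxy b] at hb

noncomputable def overlap (r : (Fin n → A) → ℝ) : ℝ :=
  ∑ b, (∑ x ∈ P.block b, r x) ^ 2 / #(P.block b)

lemma star_dotProduct_proj_mulVec (r : (Fin n → A) → ℝ) :
    star (fun x => (r x : ℂ)) ⬝ᵥ P.proj *ᵥ (fun x => (r x : ℂ)) = P.overlap r := by
  simp only [proj_eq_sum_block, Matrix.sum_mulVec, dotProduct_sum,
    star_dotProduct_vecMulVec_subsetState_mulVec, overlap, Complex.ofReal_sum]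

lemma sum_sq_boundary_le (hA : 0 < Fintype.card A) (S : Finset (Fin n → A))
    {r : (Fin n → A) → ℝ} (hr : ∀ y ∉ S, r y = 0) :
    ∑ x ∈ S.filter (fun x => ∃ y, y ∉ S ∧ 0 < (P.proj x y).re), r x ^ 2 ≤
      Fintype.card A ^ k * (∑ x, r x ^ 2 - P.overlap r) := by
  -- Each boundary string shares a block with a zero of `r`, and on such a block Cauchy–Schwarz
  -- bounds `∑ r²` by the block size times the block's contribution to `⟨r|I - P̃|r⟩`.
  set defect := fun b => ∑ x ∈ P.block b, r x ^ 2 - (∑ x ∈ P.block b, r x) ^ 2 / #(P.block b)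
  set Z := univ.filter fun b => ∃ y ∈ P.block b, y ∉ S
  have hsub : S.filter (fun x => ∃ y, y ∉ S ∧ 0 < (P.proj x y).re) ⊆ Z.biUnion P.block := by
    intro x hx
    obtain ⟨-, y, hyS, hxy⟩ := mem_filter.1 hx
    obtain ⟨b, hxb, hyb⟩ := P.exists_mem_block_of_proj_re_pos hxy
    exact mem_biUnion.2 ⟨b, mem_filter.2 ⟨mem_univ b, y, hyb, hyS⟩, hxb⟩
  calc ∑ x ∈ S.filter (fun x => ∃ y, y ∉ S ∧ 0 < (P.proj x y).re), r x ^ 2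
      ≤ ∑ x ∈ Z.biUnion P.block, r x ^ 2 :=
        sum_le_sum_of_subset_of_nonneg hsub fun x _ _ => sq_nonneg (r x)
    _ = ∑ b ∈ Z, ∑ x ∈ P.block b, r x ^ 2 :=
        sum_biUnion (P.pairwiseDisjoint_block.subset (Set.subset_univ _))
    _ ≤ ∑ b ∈ Z, Fintype.card A ^ k * defect b := by
        refine sum_le_sum fun b hb => ?_
        obtain ⟨y, hyb, hyS⟩ := (mem_filter.1 hb).2
        refine (sum_sq_le_card_mul_sub_of_eq_zero hyb (hr y hyS)).trans ?_
        gcongr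
        · exact sub_nonneg.2 (sq_sum_div_card_le_sum_sq _ _)
        · exact_mod_cast P.card_block_le hA b
    _ ≤ ∑ b, Fintype.card A ^ k * defect b :=
        sum_le_sum_of_subset_of_nonneg (subset_univ Z) fun b _ _ =>
          mul_nonneg (by positivity) (sub_nonneg.2 (sq_sum_div_card_le_sum_sq _ _))
    _ = Fintype.card A ^ k * (∑ b, ∑ x ∈ P.block b, r x ^ 2 - P.overlap r) := by
        rw [← mul_sum, sum_sub_distrib, overlap]
    _ ≤ Fintype.card A ^ k * (∑ x, r x ^ 2 - P.overlap r) := by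
        gcongr
        exact P.sum_sum_block_le fun x => sq_nonneg (r x)

end UTerm

lemma re_star_dotProduct_ham_mulVec {m : ℕ} (terms : Fin m → UTerm A n k)
    (r : (Fin n → A) → ℝ) :
    (star (fun x => (r x : ℂ)) ⬝ᵥ ham terms *ᵥ (fun x => (r x : ℂ))).re =
      (m : ℝ)⁻¹ * ∑ i, (∑ x, r x ^ 2 - (terms i).overlap r) := by
  have hnorm : star (fun x => (r x : ℂ)) ⬝ᵥ (fun x => (r x : ℂ)) = ((∑ x, r x ^ 2 : ℝ) : ℂ) := by
    simp [dotProduct, sq]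
  simp only [ham, Matrix.smul_mulVec, Matrix.sum_mulVec, Matrix.sub_mulVec, Matrix.one_mulVec,
    dotProduct_smul, dotProduct_sum, dotProduct_sub, hnorm, UTerm.star_dotProduct_proj_mulVec]
  rw [← Complex.ofReal_re (_ * _), smul_eq_mul]
  push_cast
  rfl

lemma sum_sq_boundary_le_ham (hA : 0 < Fintype.card A) {m : ℕ} (hm : 0 < m)
    (terms : Fin m → UTerm A n k) (S : Finset (Fin n → A)) {r : (Fin n → A) → ℝ}
    (hr : ∀ y ∉ S, r y = 0) :
    ∑ x ∈ S.filter (fun x => ∃ i, ∃ y, y ∉ S ∧ 0 < ((terms i).proj x y).re), r x ^ 2 ≤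
      m * Fintype.card A ^ k *
        (star (fun x => (r x : ℂ)) ⬝ᵥ ham terms *ᵥ (fun x => (r x : ℂ))).re := by
  have hunion : S.filter (fun x => ∃ i, ∃ y, y ∉ S ∧ 0 < ((terms i).proj x y).re) =
      univ.biUnion fun i => S.filter (fun x => ∃ y, y ∉ S ∧ 0 < ((terms i).proj x y).re) := by
    ext x
    simp
  have hm' : (m : ℝ) ≠ 0 := Nat.cast_ne_zero.2 hm.ne'
  calc _ ≤ ∑ i, ∑ x ∈ S.filter (fun x => ∃ y, y ∉ S ∧ 0 < ((terms i).proj x y).re), r x ^ 2 :=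
        hunion ▸ sum_biUnion_le_sum_sum (fun x => sq_nonneg (r x)) _ _
    _ ≤ ∑ i, Fintype.card A ^ k * (∑ x, r x ^ 2 - (terms i).overlap r) :=
        sum_le_sum fun i _ => (terms i).sum_sq_boundary_le hA S hr
    _ = _ := by
        rw [re_star_dotProduct_ham_mulVec, ← mul_sum]
        field_simp

theorem stmt18_general {A : Type} [Fintype A] [DecidableEq A] (hA : 2 ≤ Fintype.card A)
    {n k m : ℕ} (hm : 1 ≤ m)
    (terms : Fin m → UTerm A n k)
    (ψ : (Fin n → A) → ℂ) (hψnn : ∀ x, (ψ x).im = 0 ∧ 0 ≤ (ψ x).re)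
    (hψunit : ∑ x, ‖ψ x‖ ^ 2 = 1)
    (S : Finset (Fin n → A)) (hS : ↑S = {x | ψ x ≠ 0})
    (g h : ℝ) (hg : 0 < g)
    (hlb : ∀ x ∈ S, 1 / Real.sqrt (g * S.card) ≤ (ψ x).re)
    (hen : (star ψ ⬝ᵥ (ham terms).mulVec ψ).re < 1 / h) :
    ((S.filter (fun x => ∃ i, ∃ y, y ∉ S ∧ 0 < ((terms i).proj x y).re)).card : ℝ) <
      (m * (Fintype.card A : ℝ) ^ k * g / h) * (S.card : ℝ) := by
  set r : (Fin n → A) → ℝ := fun x => (ψ x).re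
  have hψr : ψ = fun x => (r x : ℂ) := funext fun x => Complex.ext rfl (hψnn x).1
  have hr : ∀ y ∉ S, r y = 0 := fun y hy => by
    have hψy : ψ y = 0 := by simpa using (Set.ext_iff.1 hS y).not.1 hy
    simp [r, hψy]
  have hSne : S.Nonempty := by
    rw [nonempty_iff_ne_empty]
    rintro rfl
    have hψ0 : ∀ x, ψ x = 0 := fun x => by simpa using Set.ext_iff.1 hS x
    simp [hψ0] at hψunit
  have hgS : 0 < g * #S := mul_pos hg (Nat.cast_pos.2 hSne.card_pos)
  have hA0 : 0 < Fintype.card A := by omega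
  have hlow := card_le_mul_sum_sq_of_one_div_sqrt_le hgS
    (s := S.filter (fun x => ∃ i, ∃ y, y ∉ S ∧ 0 < ((terms i).proj x y).re))
    fun x hx => hlb x (mem_filter.1 hx).1
  have hup := sum_sq_boundary_le_ham hA0 hm terms S hr
  rw [← hψr] at hup
  have hmA : (0 : ℝ) < m * Fintype.card A ^ k := by positivity
  calc _ ≤ g * #S * _ := hlow
    _ ≤ g * #S * (m * Fintype.card A ^ k * (star ψ ⬝ᵥ (ham terms).mulVec ψ).re) :=
        mul_le_mul_of_nonneg_left hup hgS.le
    _ < g * #S * (m * Fintype.card A ^ k * (1 / h)) :=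
        mul_lt_mul_of_pos_left (mul_lt_mul_of_pos_left hen hmA) hgS
    _ = (m * Fintype.card A ^ k * g / h) * #S := by ring

/-- A nice low-energy state has a small boundary: if `ψ` is a non-negative unit vector with
support `S` containing no bad strings, all amplitudes at least `1/√(g|S|)`, and energy less
than `1/h`, then fewer than `(m|Σ|^k g/h)|S|` strings of `S` are connected to a string
outside `S`. -/
theorem stmt18 {A : Type} [Fintype A] [DecidableEq A] (hA : 2 ≤ Fintype.card A)
    {n k m : ℕ} (hn : 1 ≤ n) (hk : 1 ≤ k) (hm : 1 ≤ m)
    (terms : Fin m → UTerm A n k)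
    (ψ : (Fin n → A) → ℂ) (hψnn : ∀ x, (ψ x).im = 0 ∧ 0 ≤ (ψ x).re)
    (hψunit : ∑ x, ‖ψ x‖ ^ 2 = 1)
    (S : Finset (Fin n → A)) (hS : ↑S = {x | ψ x ≠ 0})
    (hnobad : ∀ x ∈ S, ¬ Bad terms x)
    (g h : ℝ) (hg : 0 < g) (hh : 0 < h)
    (hlb : ∀ x ∈ S, 1 / Real.sqrt (g * S.card) ≤ (ψ x).re)
    (hen : (star ψ ⬝ᵥ (ham terms).mulVec ψ).re < 1 / h) :
    ((S.filter (fun x => ∃ i, ∃ y, y ∉ S ∧ 0 < ((terms i).proj x y).re)).card : ℝ) <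
      (m * (Fintype.card A : ℝ) ^ k * g / h) * (S.card : ℝ) :=
  stmt18_general hA hm terms ψ hψnn hψunit S hS g h hg hlb hen
end
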